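/- If A ⊆ B, B has asymptotic density, then there exists C with asymptotic density such that A ⊆ C ⊆ B and d(C) = d̿̿(A). -/

import Mathlib

open Filter

/-- `cnt A n` = number of elements of `A` in `[1, n]`, as a real number. -/
noncomputable def cnt (A : Set ℕ) (n : ℕ) : ℝ :=
  ∑ k ∈ Finset.Icc 1 n, A.indicator (fun _ => (1 : ℝ)) k

/-- `A` has asymptotic density `x`. -/
def HasDens (A : Set ℕ) (x : ℝ) : Prop :=
  Filter.Tendsto (fun n => cnt A n / n) Filter.atTop (nhds x)

/-- `lld A` = sup of densities of subsets of `A` having asymptotic density. -/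
noncomputable def lld (A : Set ℕ) : ℝ := sSup {x : ℝ | ∃ B ⊆ A, HasDens B x}

/-- `uud A` = inf of densities of supersets of `A` having asymptotic density. -/
noncomputable def uud (A : Set ℕ) : ℝ := sInf {x : ℝ | ∃ C : Set ℕ, A ⊆ C ∧ HasDens C x}

/-!
Let `u = d̿(A) ≤ d(B)` and build `C` greedily: every element of `A` is taken, and an element
of `B` is taken whenever this keeps `|C ∩ [1,n]| ≤ u n`. If the count of `C` is above the line
`u n`, then since the last time it was at the line only elements of `A` were added, and `A`
lies in sets of density below `u + ε`, so they arrive at rate at most `u + ε`. If the count is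
below `u n - 1`, then since the last time it was near the line every element of `B` was taken,
and these arrive at rate at least `d(B) - ε ≥ u - ε`. Hence `|C ∩ [1,n]| = u n + o(n)`.
-/

lemma tendsto_div_natCast_iff_abs_sub_le (f : ℕ → ℝ) (x : ℝ) :
    Tendsto (fun n : ℕ => f n / n) atTop (nhds x) ↔
      ∀ ε > 0, ∃ K : ℝ, ∀ n : ℕ, |f n - x * n| ≤ ε * n + K := by
  constructor
  · intro h ε hε
    obtain ⟨N, hN⟩ := Metric.tendsto_atTop.1 h ε hε
    refine ⟨∑ i ∈ Finset.range (N + 1), |f i - x * i|, fun n => ?_⟩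
    have hK : 0 ≤ ∑ i ∈ Finset.range (N + 1), |f i - x * i| :=
      Finset.sum_nonneg fun i _ => abs_nonneg _
    rcases lt_or_ge n (N + 1) with hn | hn
    · have := Finset.single_le_sum (fun i _ => abs_nonneg (f i - x * i)) (Finset.mem_range.2 hn)
      have : 0 ≤ ε * n := by positivity
      linarith
    · have hn0 : (0 : ℝ) < n := by exact_mod_cast (by omega : 0 < n)
      have hdist : |f n / n - x| < ε := by simpa [Real.dist_eq] using hN n (by omega)
      have hsplit : f n - x * n = (f n / n - x) * n := by field_simp
      rw [hsplit, abs_mul, abs_of_pos hn0]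
      linarith [mul_le_mul_of_nonneg_right hdist.le hn0.le]
  · intro h
    refine Metric.tendsto_atTop.2 fun ε hε => ?_
    obtain ⟨K, hK⟩ := h (ε / 2) (half_pos hε)
    obtain ⟨N, hN⟩ := exists_nat_gt (2 * K / ε)
    refine ⟨N + 1, fun n hn => ?_⟩
    have hn0 : (0 : ℝ) < n := by exact_mod_cast (by omega : 0 < n)
    have hKn : 2 * K < ε * n := by
      have : 2 * K / ε < n := hN.trans_le (by exact_mod_cast (by omega : N ≤ n))
      rw [div_lt_iff₀ hε] at this
      linarith
    rw [Real.dist_eq, show f n / n - x = (f n - x * n) / n by field_simp, abs_div,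
      abs_of_pos hn0, div_lt_iff₀ hn0]
    linarith [hK n]

lemma hasDens_iff (C : Set ℕ) (x : ℝ) :
    HasDens C x ↔ ∀ ε > 0, ∃ K : ℝ, ∀ n : ℕ, |cnt C n - x * n| ≤ ε * n + K :=
  tendsto_div_natCast_iff_abs_sub_le _ x

lemma hasDens_of_forall_exists_le {C : Set ℕ} {x : ℝ}
    (hupper : ∀ ε > 0, ∃ K : ℝ, ∀ n : ℕ, cnt C n - x * n ≤ ε * n + K)
    (hlower : ∀ ε > 0, ∃ K : ℝ, ∀ n : ℕ, x * n - cnt C n ≤ ε * n + K) : HasDens C x := by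
  refine (hasDens_iff C x).2 fun ε hε => ?_
  obtain ⟨K₁, hK₁⟩ := hupper ε hε
  obtain ⟨K₂, hK₂⟩ := hlower ε hε
  exact ⟨max K₁ K₂, fun n => abs_sub_le_iff.2
    ⟨(hK₁ n).trans (by gcongr; exact le_max_left _ _),
      (hK₂ n).trans (by gcongr; exact le_max_right _ _)⟩⟩

lemma cnt_zero (A : Set ℕ) : cnt A 0 = 0 := by simp [cnt]

lemma cnt_succ (A : Set ℕ) (n : ℕ) :
    cnt A (n + 1) = cnt A n + A.indicator (fun _ => (1 : ℝ)) (n + 1) :=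
  Finset.sum_Icc_succ_top (by omega) _

lemma cnt_succ_of_mem {A : Set ℕ} {n : ℕ} (h : n + 1 ∈ A) : cnt A (n + 1) = cnt A n + 1 := by
  rw [cnt_succ, Set.indicator_of_mem h]

lemma cnt_succ_of_notMem {A : Set ℕ} {n : ℕ} (h : n + 1 ∉ A) : cnt A (n + 1) = cnt A n := by
  rw [cnt_succ, Set.indicator_of_notMem h, add_zero]

lemma cnt_nonneg (A : Set ℕ) (n : ℕ) : 0 ≤ cnt A n :=
  Finset.sum_nonneg fun _ _ => Set.indicator_nonneg (fun _ _ => zero_le_one) _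

lemma cnt_le_cnt_succ (A : Set ℕ) (n : ℕ) : cnt A n ≤ cnt A (n + 1) := by
  rw [cnt_succ]
  exact le_add_of_nonneg_right (Set.indicator_nonneg (fun _ _ => zero_le_one) _)

lemma cnt_sub_cnt_le_of_subset {A C : Set ℕ} (h : A ⊆ C) {k n : ℕ} (hkn : k ≤ n) :
    cnt A n - cnt A k ≤ cnt C n - cnt C k := by
  induction n, hkn using Nat.le_induction with
  | base => simp
  | succ n _ ih =>
    have := Set.indicator_le_indicator_of_subset h (f := fun _ => (1 : ℝ))
      (fun _ => zero_le_one) (n + 1)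
    rw [cnt_succ, cnt_succ]
    linarith

lemma HasDens.nonneg {C : Set ℕ} {x : ℝ} (h : HasDens C x) : 0 ≤ x :=
  ge_of_tendsto' h fun n => div_nonneg (cnt_nonneg C n) n.cast_nonneg

section Greedy

variable {A B G : Set ℕ} {u : ℝ}

lemma exists_cnt_le_add_cnt_sub_cnt
    (hG : ∀ n : ℕ, n + 1 ∈ G → n + 1 ∈ A ∨ cnt G n + 1 ≤ u * (n + 1)) (n : ℕ) :
    ∃ k ≤ n, cnt G n ≤ u * k + (cnt A n - cnt A k) := by
  induction n with
  | zero => exact ⟨0, le_rfl, by simp [cnt_zero]⟩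
  | succ n ih =>
    obtain ⟨k, hkn, hk⟩ := ih
    have hA := cnt_le_cnt_succ A n
    by_cases hn : n + 1 ∈ G
    · rw [cnt_succ_of_mem hn]
      rcases hG n hn with hnA | hle
      · exact ⟨k, hkn.trans n.le_succ, by rw [cnt_succ_of_mem hnA]; linarith⟩
      · exact ⟨n + 1, le_rfl, by push_cast; linarith⟩
    · exact ⟨k, hkn.trans n.le_succ, by rw [cnt_succ_of_notMem hn]; linarith⟩

lemma exists_cnt_sub_cnt_le_cnt_sub_cnt
    (hG : ∀ n : ℕ, n + 1 ∈ B → cnt G n + 1 ≤ u * (n + 1) → n + 1 ∈ G) (n : ℕ) :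
    ∃ m ≤ n, u * m - 1 ≤ cnt G m ∧ cnt B n - cnt B m ≤ cnt G n - cnt G m := by
  induction n with
  | zero => exact ⟨0, le_rfl, by simp [cnt_zero]⟩
  | succ n ih =>
    by_cases hlow : u * (n + 1 : ℕ) - 1 ≤ cnt G (n + 1)
    · exact ⟨n + 1, le_rfl, hlow, by simp⟩
    obtain ⟨m, hmn, hm, hBG⟩ := ih
    have hstep : cnt B (n + 1) - cnt B n ≤ cnt G (n + 1) - cnt G n := by
      have hGn := cnt_le_cnt_succ G n
      by_cases hnB : n + 1 ∈ B
      · push_cast at hlow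
        have hnG : n + 1 ∈ G := hG n hnB (by linarith)
        rw [cnt_succ_of_mem hnB, cnt_succ_of_mem hnG]
        linarith
      · rw [cnt_succ_of_notMem hnB]
        linarith
    exact ⟨m, hmn.trans n.le_succ, hm, by linarith⟩

lemma exists_cnt_sub_mul_le
    (hA : ∀ ε > 0, ∃ C : Set ℕ, A ⊆ C ∧ ∃ d ≤ u + ε, HasDens C d)
    (hG : ∀ n : ℕ, n + 1 ∈ G → n + 1 ∈ A ∨ cnt G n + 1 ≤ u * (n + 1)) :
    ∀ ε > 0, ∃ K : ℝ, ∀ n : ℕ, cnt G n - u * n ≤ ε * n + K := by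
  intro ε hε
  obtain ⟨C, hAC, d, hd, hC⟩ := hA (ε / 2) (half_pos hε)
  obtain ⟨K, hK⟩ := (hasDens_iff C d).1 hC (ε / 2) (half_pos hε)
  refine ⟨2 * K, fun n => ?_⟩
  obtain ⟨k, hkn, hk⟩ := exists_cnt_le_add_cnt_sub_cnt hG n
  have hkn' : (k : ℝ) ≤ n := by exact_mod_cast hkn
  have hCn := (abs_le.1 (hK n)).2
  have hCk := (abs_le.1 (hK k)).1
  have hrate : d * (n - k) ≤ (u + ε / 2) * (n - k) :=
    mul_le_mul_of_nonneg_right hd (by linarith)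
  have := cnt_sub_cnt_le_of_subset hAC hkn
  linarith

lemma exists_mul_sub_cnt_le {b : ℝ} (hB : HasDens B b) (hub : u ≤ b)
    (hG : ∀ n : ℕ, n + 1 ∈ B → cnt G n + 1 ≤ u * (n + 1) → n + 1 ∈ G) :
    ∀ ε > 0, ∃ K : ℝ, ∀ n : ℕ, u * n - cnt G n ≤ ε * n + K := by
  intro ε hε
  obtain ⟨K, hK⟩ := (hasDens_iff B b).1 hB (ε / 2) (half_pos hε)
  refine ⟨2 * K + 1, fun n => ?_⟩
  obtain ⟨m, hmn, hm, hBG⟩ := exists_cnt_sub_cnt_le_cnt_sub_cnt hG n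
  have hmn' : (m : ℝ) ≤ n := by exact_mod_cast hmn
  have hBn := (abs_le.1 (hK n)).1
  have hBm := (abs_le.1 (hK m)).2
  have hrate : u * (n - m) ≤ b * (n - m) := mul_le_mul_of_nonneg_right hub (by linarith)
  have hεm : ε / 2 * m ≤ ε / 2 * n := by gcongr
  linarith

end Greedy

open Classical in
noncomputable def greedyCnt (A B : Set ℕ) (u : ℝ) : ℕ → ℝ
  | 0 => 0
  | n + 1 => greedyCnt A B u n +
      if n + 1 ∈ A ∨ (n + 1 ∈ B ∧ greedyCnt A B u n + 1 ≤ u * (n + 1)) then 1 else 0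

def greedySet (A B : Set ℕ) (u : ℝ) : Set ℕ :=
  {n | n ∈ A ∨ (n ∈ B ∧ greedyCnt A B u (n - 1) + 1 ≤ u * n)}

lemma cnt_greedySet (A B : Set ℕ) (u : ℝ) : cnt (greedySet A B u) = greedyCnt A B u := by
  classical
  funext n
  induction n with
  | zero => rw [cnt_zero, greedyCnt]
  | succ n ih =>
    rw [cnt_succ, greedyCnt, ih, Set.indicator_apply]
    simp [greedySet]

lemma subset_greedySet (A B : Set ℕ) (u : ℝ) : A ⊆ greedySet A B u := fun _ => Or.inl

lemma greedySet_subset {A B : Set ℕ} (hAB : A ⊆ B) (u : ℝ) : greedySet A B u ⊆ B :=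
  fun _ hn => hn.elim (@hAB _) And.left

lemma mem_greedySet_succ {A B : Set ℕ} {u : ℝ} {n : ℕ} :
    n + 1 ∈ greedySet A B u ↔
      n + 1 ∈ A ∨ (n + 1 ∈ B ∧ cnt (greedySet A B u) n + 1 ≤ u * (n + 1)) := by
  rw [cnt_greedySet]
  simp [greedySet]

theorem stmt_16 (A B : Set ℕ) (hAB : A ⊆ B) (b : ℝ) (hB : HasDens B b) :
    ∃ C : Set ℕ, A ⊆ C ∧ C ⊆ B ∧ HasDens C (uud A) := by
  set G := greedySet A B (uud A)
  have hbS : b ∈ {x : ℝ | ∃ C : Set ℕ, A ⊆ C ∧ HasDens C x} := ⟨B, hAB, hB⟩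
  have hbdd : BddBelow {x : ℝ | ∃ C : Set ℕ, A ⊆ C ∧ HasDens C x} :=
    ⟨0, fun _ ⟨_, _, hC⟩ => hC.nonneg⟩
  have hA : ∀ ε > 0, ∃ C : Set ℕ, A ⊆ C ∧ ∃ d ≤ uud A + ε, HasDens C d := fun ε hε => by
    obtain ⟨d, ⟨C, hAC, hC⟩, hd⟩ :=
      exists_lt_of_csInf_lt ⟨b, hbS⟩ (lt_add_of_pos_right (uud A) hε)
    exact ⟨C, hAC, d, hd.le, hC⟩
  have hupper := exists_cnt_sub_mul_le (G := G) hA fun n hn =>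
    (mem_greedySet_succ.1 hn).imp_right And.right
  have hlower := exists_mul_sub_cnt_le (G := G) hB (csInf_le hbdd hbS)
    fun n hnB hle => mem_greedySet_succ.2 (Or.inr ⟨hnB, hle⟩)
  refine ⟨G, subset_greedySet A B _, greedySet_subset hAB _, ?_⟩
  exact hasDens_of_forall_exists_le hupper hlower
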